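/- arXiv:2009.02562 — 3 statements merged into one kernel-verified Lean document; each statement's English description precedes it below -/
import Mathlib

section
/- Let A ∈ ℝ^{N×N} be a symmetric matrix with nonnegative entries, F ∈ ℝ^{N×d₀}, and K ≥ 0 an integer. If Q is a permutation matrix with Q A Qᵀ = A and Q F = F, and Q_{ij} = 1 for some i ≠ j, then the i-th and j-th rows of Ã(A)^K F are equal. -/
open Matrix

/-- The normalized adjacency matrix with self-loops
`Ã(A) = (D(A)+I)^{-1/2} (A+I) (D(A)+I)^{-1/2}`, where `D(A)` is the diagonal matrix of row
sums and `(D(A)+I)^{-1/2}` is the diagonal matrix with entries `(D(A)_{ii}+1)^{-1/2}`. -/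
noncomputable def normAdj {n : Type*} [Fintype n] [DecidableEq n]
    (A : Matrix n n ℝ) : Matrix n n ℝ :=
  Matrix.diagonal (fun i => (Real.sqrt ((∑ j, A i j) + 1))⁻¹) * (A + 1) *
    Matrix.diagonal (fun i => (Real.sqrt ((∑ j, A i j) + 1))⁻¹)

/-- The permutation matrix of a permutation `σ`: `Q i j = 1` iff `σ i = j`. -/
def permMat {n : Type*} [DecidableEq n] (σ : Equiv.Perm n) : Matrix n n ℝ :=
  Matrix.of fun i j => if σ i = j then 1 else 0

lemma permMat_mul_apply {n m : Type*} [Fintype n] [DecidableEq n]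
    (σ : Equiv.Perm n) (M : Matrix n m ℝ) (i : n) (k : m) :
    (permMat σ * M) i k = M (σ i) k := by
  simp [permMat, Matrix.mul_apply]

lemma mul_permMat_apply {n m : Type*} [Fintype n] [DecidableEq n]
    (σ : Equiv.Perm n) (M : Matrix m n ℝ) (i : m) (k : n) :
    (M * permMat σ) i k = M i (σ.symm k) := by
  simp only [permMat, Matrix.mul_apply, Matrix.of_apply, mul_ite, mul_one, mul_zero]
  rw [Finset.sum_eq_single (σ.symm k)]
  · simp
  · intro b _ hb; simp only [ite_eq_right_iff]; intro h; exact absurd (by simp [← h]) hb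
  · simp

/-- automorphic node pairs receive identical representations under the
permutation-equivariant linear SGC model `(A, F) ↦ Ã(A)^K F`. -/
theorem stmt_6 {N d₀ : ℕ} (A : Matrix (Fin N) (Fin N) ℝ) (hsym : A.IsSymm)
    (hnonneg : ∀ i j, 0 ≤ A i j) (F : Matrix (Fin N) (Fin d₀) ℝ) (K : ℕ)
    (τ : Equiv.Perm (Fin N))
    (hA : permMat τ * A * (permMat τ)ᵀ = A) (hF : permMat τ * F = F)
    (i j : Fin N) (hij : i ≠ j) (hQ : permMat τ i j = 1) :
    ∀ k, (normAdj A ^ K * F) i k = (normAdj A ^ K * F) j k := by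
  have hτ : τ i = j := by
    by_contra h; simp [permMat, h] at hQ
  -- entrywise invariance of A
  have hAe : ∀ a b, A (τ a) (τ b) = A a b := by
    intro a b
    have h1 : (permMat τ * A * (permMat τ)ᵀ) a b = A (τ a) (τ b) := by
      rw [Matrix.mul_apply]
      have h2 : ∀ m, (permMat τ * A) a m * permMat τ b m
          = if τ b = m then A (τ a) m else 0 := by
        intro m
        rw [permMat_mul_apply]
        simp [permMat, mul_ite]
      simp only [Matrix.transpose_apply, h2]
      simp
    rw [← h1, hA]
  -- row sums invariant
  have hrow : ∀ a, (∑ m, A (τ a) m) = ∑ m, A a m := by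
    intro a
    rw [← Equiv.sum_comp τ (fun m => A (τ a) m)]
    exact Finset.sum_congr rfl fun m _ => hAe a m
  set f : Fin N → ℝ := fun a => (Real.sqrt ((∑ m, A a m) + 1))⁻¹ with hf
  have hdiag : Commute (permMat τ) (Matrix.diagonal f) := by
    ext a b
    show (permMat τ * Matrix.diagonal f) a b = (Matrix.diagonal f * permMat τ) a b
    rw [permMat_mul_apply, mul_permMat_apply]
    by_cases h : τ a = b
    · simp [Matrix.diagonal_apply, h.symm, ← h, hf, hrow]
    · rw [Matrix.diagonal_apply_ne _ h, Matrix.diagonal_apply_ne]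
      intro h'; exact h (by rw [h']; simp)
  have hA1 : Commute (permMat τ) (A + 1) := by
    ext a b
    show (permMat τ * (A + 1)) a b = ((A + 1) * permMat τ) a b
    rw [permMat_mul_apply, mul_permMat_apply]
    have hAab : A (τ a) b = A a (τ.symm b) := by
      conv_rhs => rw [← hAe a (τ.symm b)]
      simp
    simp only [Matrix.add_apply, hAab]
    congr 1
    by_cases h : τ a = b
    · simp [Matrix.one_apply, ← h]
    · rw [Matrix.one_apply_ne h, Matrix.one_apply_ne]
      intro h'; exact h (by rw [h']; simp)
  have hcomm : Commute (permMat τ) (normAdj A) := by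
    unfold normAdj
    rw [← hf]
    exact (hdiag.mul_right hA1).mul_right hdiag
  have key : permMat τ * (normAdj A ^ K * F) = normAdj A ^ K * F := by
    rw [← Matrix.mul_assoc, (hcomm.pow_right K).eq, Matrix.mul_assoc, hF]
  intro k
  have := congrFun (congrFun key i) k
  rw [permMat_mul_apply, hτ] at this
  exact this.symm
end

section
/- Let A ∈ ℝ^{N×N} be a symmetric matrix with nonnegative entries, F ∈ ℝ^{N×d₀}, and K ≥ 0 an integer. Let A' = fromBlocks(A, 0, 0, A) ∈ ℝ^{2N×2N} and let F' ∈ ℝ^{2N×d₀} be the vertical stacking of F on top of F (i.e. F'_{i,:} = F_{i,:} and F'_{i+N,:} = F_{i,:} for 1 ≤ i ≤ N). Then for every 1 ≤ i ≤ N, the i-th and (i+N)-th rows of Ã(A')^K F' are equal. -/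
/-- on the disjoint union `A' = fromBlocks A 0 0 A` with the duplicated feature
matrix `F'` (stacking `F` on top of `F`), the two copies of each node receive identical rows
under the linear SGC model: row `inl i` equals row `inr i` of `Ã(A')^K F'`. -/
theorem stmt_8 {N d₀ : ℕ} (A : Matrix (Fin N) (Fin N) ℝ) (hsym : A.IsSymm)
    (hnonneg : ∀ i j, 0 ≤ A i j) (F : Matrix (Fin N) (Fin d₀) ℝ) (K : ℕ)
    (A' : Matrix (Fin N ⊕ Fin N) (Fin N ⊕ Fin N) ℝ) (hA' : A' = Matrix.fromBlocks A 0 0 A)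
    (F' : Matrix (Fin N ⊕ Fin N) (Fin d₀) ℝ)
    (hF'l : ∀ i, F' (Sum.inl i) = F i) (hF'r : ∀ i, F' (Sum.inr i) = F i) :
    ∀ (i : Fin N) (k : Fin d₀),
      (normAdj A' ^ K * F') (Sum.inl i) k = (normAdj A' ^ K * F') (Sum.inr i) k := by
  set σ : (Fin N ⊕ Fin N) ≃ (Fin N ⊕ Fin N) := Equiv.sumComm (Fin N) (Fin N) with hσ
  have hAσ : ∀ a b, A' (σ a) (σ b) = A' a b := by
    rintro (a | a) (b | b) <;> simp [hA', hσ]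
  have hrow : ∀ a, (∑ j, A' (σ a) j) = ∑ j, A' a j := by
    intro a
    rw [← Equiv.sum_comp σ (fun j => A' (σ a) j)]
    exact Finset.sum_congr rfl fun b _ => hAσ a b
  have hMσ : ∀ a b, normAdj A' (σ a) (σ b) = normAdj A' a b := by
    intro a b
    simp only [normAdj, Matrix.mul_diagonal, Matrix.diagonal_mul, Matrix.add_apply,
      Matrix.one_apply, EmbeddingLike.apply_eq_iff_eq]
    rw [hrow, hrow, hAσ]
  have key : ∀ (m : ℕ) (a : Fin N ⊕ Fin N) (k : Fin d₀),
      (normAdj A' ^ m * F') (σ a) k = (normAdj A' ^ m * F') a k := by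
    intro m
    induction m with
    | zero =>
      rintro (a | a) k <;> simp [hσ, hF'l, hF'r]
    | succ m ih =>
      intro a k
      rw [pow_succ', Matrix.mul_assoc, Matrix.mul_apply, Matrix.mul_apply]
      rw [← Equiv.sum_comp σ]
      exact Finset.sum_congr rfl fun b _ => by rw [hMσ, ih]
  intro i k
  have := key K (Sum.inl i) k
  simpa [hσ] using this.symm
end

section
/- Let A ∈ ℝ^{N×N} be a symmetric matrix with nonnegative entries, K ≥ 0 an integer, and S = Ã(A)^K (Ã(A)^K)ᵀ. For every ε > 0 and δ > 0 there exists d₀ such that for every integer d > d₀ and all indices i, j: under the probability measure μ_{N,d} on N×d matrices E with i.i.d. N(0,1) entries, the event { E : |S_{ij} − (1/d)·(Ã(A)^K E)_{i,:} · (Ã(A)^K E)_{j,:}| < ε } has probability greater than 1 − δ. -/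
open MeasureTheory ProbabilityTheory Matrix

/-- Matrices are measurable as functions. -/
instance {m n α : Type*} [MeasurableSpace α] : MeasurableSpace (Matrix m n α) :=
  inferInstanceAs (MeasurableSpace (m → n → α))

/-- The probability measure on `n × d` real matrices under which all entries are
independent standard Gaussians `N(0,1)`. -/
noncomputable def gaussMatrix (n d : ℕ) : Measure (Matrix (Fin n) (Fin d) ℝ) :=
  Measure.pi fun _ : Fin n => Measure.pi fun _ : Fin d => gaussianReal 0 1

/-! The columns `g₁, …, g_d` of `E` are i.i.d. standard Gaussian vectors, so for `B = Ã(A)^K` the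
summands `(B gₖ)ᵢ (B gₖ)ⱼ` of the decoder are i.i.d. Since `𝔼[g gᵀ] = I` their mean is
`(B Bᵀ)ᵢⱼ = Sᵢⱼ`, and since Gaussian vectors have moments of all orders their variance `v` is
finite. Chebyshev's inequality bounds the probability of an `ε`-deviation of the decoder by
`v / (d ε²)`, which drops below `δ` for large `d`, uniformly in the finitely many pairs `(i, j)`. -/

open Filter
open scoped ENNReal Topology

lemma one_sub_lt_measure_of_measure_compl_lt {α : Type*} [MeasurableSpace α] {μ : Measure α}
    [IsProbabilityMeasure μ] {s : Set α} {δ : ℝ≥0∞} (h : μ sᶜ < min δ 1) : 1 - δ < μ s := by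
  have hcover : 1 ≤ μ s + μ sᶜ := by
    rw [← measure_univ (μ := μ), ← Set.union_compl_self s]
    exact measure_union_le s sᶜ
  calc 1 - δ < 1 - μ sᶜ := by
        obtain hδ | hδ := le_total δ 1
        · exact ((ENNReal.cancel_of_ne ENNReal.one_ne_top).tsub_lt_tsub_iff_left_of_le
            (ENNReal.cancel_of_ne (ne_top_of_le_ne_top ENNReal.one_ne_top hδ)) hδ).2
            (h.trans_le (min_le_left _ _))
        · rw [tsub_eq_zero_of_le hδ]
          exact tsub_pos_of_lt (h.trans_le (min_le_right _ _))
    _ ≤ μ s := tsub_le_iff_right.2 hcover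

section SampleMean

variable {α : Type*} [MeasurableSpace α] {ν : Measure α} [IsProbabilityMeasure ν] {g : α → ℝ}

theorem meas_pi_ge_abs_sampleMean_sub_le_variance_div (hg : MemLp g 2 ν) {d : ℕ} (hd : 0 < d)
    {ε : ℝ} (hε : 0 < ε) :
    Measure.pi (fun _ : Fin d => ν) {ω | ε ≤ |(d : ℝ)⁻¹ * ∑ k, g (ω k) - ν[g]|}
      ≤ ENNReal.ofReal (Var[g; ν] / (d * ε ^ 2)) := by
  set μ := Measure.pi fun _ : Fin d => ν
  set Y : (Fin d → α) → ℝ := ∑ k, fun ω => g (ω k)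
  have hY_apply (ω : Fin d → α) : Y ω = ∑ k, g (ω k) := Finset.sum_apply _ _ _
  have hgk (k : Fin d) : MemLp (fun ω : Fin d → α => g (ω k)) 2 μ :=
    hg.comp_measurePreserving (measurePreserving_eval _ k)
  have hY : MemLp Y 2 μ := memLp_finsetSum' _ fun k _ => hgk k
  have hmean : μ[Y] = (d : ℝ) * ν[g] := by
    simp only [hY_apply]
    rw [integral_finsetSum _ fun k _ => (hgk k).integrable one_le_two,
      Finset.sum_congr rfl fun k _ =>
        integral_comp_eval (μ := fun _ : Fin d => ν) (i := k) hg.aestronglyMeasurable]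
    simp
  have hvar : Var[Y; μ] = d * Var[g; ν] := by
    rw [variance_sum_pi fun _ => hg]
    simp
  have hd' : (0 : ℝ) < d := Nat.cast_pos.2 hd
  calc μ {ω | ε ≤ |(d : ℝ)⁻¹ * ∑ k, g (ω k) - ν[g]|}
      ≤ μ {ω | d * ε ≤ |Y ω - μ[Y]|} := by
        refine measure_mono fun ω hω => ?_
        have hdev : Y ω - μ[Y] = d * ((d : ℝ)⁻¹ * ∑ k, g (ω k) - ν[g]) := by
          rw [hY_apply, hmean]
          field_simp
        simp only [Set.mem_ofPred_eq, hdev, abs_mul, Nat.abs_cast] at hω ⊢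
        exact mul_le_mul_of_nonneg_left hω hd'.le
    _ ≤ ENNReal.ofReal (Var[Y; μ] / (d * ε) ^ 2) := meas_ge_le_variance_div_sq hY (by positivity)
    _ = ENNReal.ofReal (Var[g; ν] / (d * ε ^ 2)) := by
        rw [hvar]
        congr 1
        field_simp

theorem eventually_one_sub_lt_meas_pi_abs_sampleMean_sub_lt (hg : MemLp g 2 ν)
    {ε δ : ℝ} (hε : 0 < ε) (hδ : 0 < δ) :
    ∀ᶠ d : ℕ in atTop, 1 - ENNReal.ofReal δ <
      Measure.pi (fun _ : Fin d => ν) {ω | |(d : ℝ)⁻¹ * ∑ k, g (ω k) - ν[g]| < ε} := by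
  have hbound : Tendsto (fun d : ℕ => Var[g; ν] / ε ^ 2 / d) atTop (𝓝 0) :=
    tendsto_const_div_atTop_nhds_zero_nat _
  filter_upwards [hbound.eventually (gt_mem_nhds (lt_min hδ one_pos)), eventually_gt_atTop 0]
    with d hsmall hd
  refine one_sub_lt_measure_of_measure_compl_lt ?_
  simp only [Set.compl_ofPred, not_lt]
  calc _ ≤ ENNReal.ofReal (Var[g; ν] / (d * ε ^ 2)) :=
        meas_pi_ge_abs_sampleMean_sub_le_variance_div hg hd hε
    _ < ENNReal.ofReal (min δ 1) := by
        rwa [ENNReal.ofReal_lt_ofReal_iff (lt_min hδ one_pos), mul_comm, ← div_div]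
    _ = min (ENNReal.ofReal δ) 1 := by simp [ENNReal.ofReal_min]

end SampleMean

theorem measurePreserving_transpose_pi {ι κ α : Type*} [Fintype ι] [Fintype κ]
    [MeasurableSpace α] (μ : Measure α) [IsProbabilityMeasure μ] :
    MeasurePreserving (fun (f : ι → κ → α) j i => f i j)
      (Measure.pi fun _ : ι => Measure.pi fun _ : κ => μ)
      (Measure.pi fun _ : κ => Measure.pi fun _ : ι => μ) := by
  refine ⟨by fun_prop, ?_⟩
  simp only [← Measure.infinitePi_eq_pi]
  rw [← Measure.infinitePi_map_curry (fun _ _ => μ), Measure.map_map (by fun_prop) (by fun_prop)]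
  have hswap : (fun (f : ι → κ → α) j i => f i j) ∘ MeasurableEquiv.curry ι κ α
      = MeasurableEquiv.curry κ ι α ∘
          MeasurableEquiv.piCongrLeft (fun _ => α) (Equiv.prodComm ι κ) := by
    ext f j i
    simp [MeasurableEquiv.curry, MeasurableEquiv.piCongrLeft, Equiv.piCongrLeft]
  rw [hswap, ← Measure.map_map (by fun_prop) (by fun_prop),
    Measure.infinitePi_map_piCongrLeft (fun _ => μ)]
  exact Measure.infinitePi_map_curry fun _ _ => μ

section StdGaussianPi

variable {ι : Type*} [Fintype ι]

lemma measurePreserving_toLp_pi_gaussianReal :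
    MeasurePreserving (WithLp.toLp 2) (Measure.pi fun _ : ι => gaussianReal 0 1)
      (stdGaussian (EuclideanSpace ℝ ι)) :=
  ⟨by fun_prop, map_pi_eq_stdGaussian⟩

lemma memLp_dotProduct_pi_gaussianReal (u : ι → ℝ) {p : ℝ≥0∞} (hp : p ≠ ∞) :
    MemLp (fun v => u ⬝ᵥ v) p (Measure.pi fun _ : ι => gaussianReal 0 1) := by
  convert (IsGaussian.memLp_dual _ (innerSL ℝ (WithLp.toLp 2 u)) p hp).comp_measurePreserving
    measurePreserving_toLp_pi_gaussianReal using 2 with v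
  simp [EuclideanSpace.inner_toLp_toLp, dotProduct_comm]

lemma memLp_dotProduct_mul_dotProduct_pi_gaussianReal (u w : ι → ℝ) :
    MemLp (fun v => (u ⬝ᵥ v) * (w ⬝ᵥ v)) 2 (Measure.pi fun _ : ι => gaussianReal 0 1) := by
  have : ENNReal.HolderTriple 4 4 2 := ⟨by
    rw [← ENNReal.coe_ofNat, ← ENNReal.coe_ofNat, ← ENNReal.coe_inv (by norm_num),
      ← ENNReal.coe_inv (by norm_num), ← ENNReal.coe_add]
    norm_num⟩
  exact (memLp_dotProduct_pi_gaussianReal w (p := 4) (by simp)).mul'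
    (memLp_dotProduct_pi_gaussianReal u (p := 4) (by simp))

lemma integral_dotProduct_mul_dotProduct_pi_gaussianReal (u w : ι → ℝ) :
    ∫ v, (u ⬝ᵥ v) * (w ⬝ᵥ v) ∂(Measure.pi fun _ : ι => gaussianReal 0 1) = u ⬝ᵥ w := by
  have h := covarianceBilin_apply (μ := stdGaussian (EuclideanSpace ℝ ι)) IsGaussian.memLp_two_id
    (WithLp.toLp 2 u) (WithLp.toLp 2 w)
  simp only [covarianceBilin_stdGaussian, id_eq, integral_id_stdGaussian, sub_zero] at h
  rw [← measurePreserving_toLp_pi_gaussianReal.map_eq,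
    integral_map (by fun_prop) (by fun_prop)] at h
  simpa [innerSL_apply_apply ℝ, EuclideanSpace.inner_toLp_toLp, dotProduct_comm] using h.symm

end StdGaussianPi

theorem stmt_12_general {N : ℕ} (A : Matrix (Fin N) (Fin N) ℝ) (K : ℕ)
    (S : Matrix (Fin N) (Fin N) ℝ) (hS : S = normAdj A ^ K * (normAdj A ^ K)ᵀ)
    (ε δ : ℝ) (hε : 0 < ε) (hδ : 0 < δ) :
    ∃ d₀ : ℕ, ∀ d : ℕ, d₀ < d → ∀ i j : Fin N,
      1 - ENNReal.ofReal δ <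
        gaussMatrix N d
          {E | |S i j -
            (1 / (d : ℝ)) * ∑ k, (normAdj A ^ K * E) i k * (normAdj A ^ K * E) j k| < ε} := by
  set B := normAdj A ^ K
  have hS_apply (i j : Fin N) :
      ∫ v, (B i ⬝ᵥ v) * (B j ⬝ᵥ v) ∂(Measure.pi fun _ : Fin N => gaussianReal 0 1) = S i j := by
    rw [integral_dotProduct_mul_dotProduct_pi_gaussianReal, hS, mul_apply']
    rfl
  have hlaw : ∀ᶠ d : ℕ in atTop, ∀ i j, 1 - ENNReal.ofReal δ <
      Measure.pi (fun _ : Fin d => Measure.pi fun _ : Fin N => gaussianReal 0 1)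
        {F | |(d : ℝ)⁻¹ * ∑ k, (B i ⬝ᵥ F k) * (B j ⬝ᵥ F k) - S i j| < ε} :=
    eventually_all.2 fun i => eventually_all.2 fun j => by
      simpa only [hS_apply] using eventually_one_sub_lt_meas_pi_abs_sampleMean_sub_lt
        (memLp_dotProduct_mul_dotProduct_pi_gaussianReal (B i) (B j)) hε hδ
  obtain ⟨d₀, hd₀⟩ := eventually_atTop.1 hlaw
  refine ⟨d₀, fun d hd i j => ?_⟩
  have hmeas : MeasurableSet
      {F : Fin d → Fin N → ℝ | |(d : ℝ)⁻¹ * ∑ k, (B i ⬝ᵥ F k) * (B j ⬝ᵥ F k) - S i j| < ε} :=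
    measurableSet_lt (by fun_prop) measurable_const
  have hT : MeasurePreserving Matrix.transpose (gaussMatrix N d)
      (Measure.pi fun _ : Fin d => Measure.pi fun _ : Fin N => gaussianReal 0 1) :=
    measurePreserving_transpose_pi _
  have hevent :
      {E : Matrix (Fin N) (Fin d) ℝ | |S i j - 1 / (d : ℝ) * ∑ k, (B * E) i k * (B * E) j k| < ε}
        = Matrix.transpose ⁻¹'
            {F | |(d : ℝ)⁻¹ * ∑ k, (B i ⬝ᵥ F k) * (B j ⬝ᵥ F k) - S i j| < ε} := by
    ext E
    simp only [one_div, mul_apply', abs_sub_comm]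
    rfl
  rw [hevent]
  exact (hd₀ d hd.le i j).trans_eq (hT.measure_preimage hmeas.nullMeasurableSet).symm

/-- Theorem 2 of the paper: linear SMP preserves the walk-based proximity
`S = Ã(A)^K (Ã(A)^K)ᵀ` with high probability: for all `ε, δ > 0` there exists `d₀` such that
for every `d > d₀` and all indices `i j`, with probability `> 1 − δ` over the stochastic
matrix `E` with i.i.d. `N(0,1)` entries,
`|S_{ij} − (1/d)·(Ã(A)^K E)_{i,:}·(Ã(A)^K E)_{j,:}| < ε`. -/
theorem stmt_12 {N : ℕ} (A : Matrix (Fin N) (Fin N) ℝ) (hsym : A.IsSymm)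
    (hnonneg : ∀ i j, 0 ≤ A i j) (K : ℕ)
    (S : Matrix (Fin N) (Fin N) ℝ) (hS : S = normAdj A ^ K * (normAdj A ^ K)ᵀ)
    (ε δ : ℝ) (hε : 0 < ε) (hδ : 0 < δ) :
    ∃ d₀ : ℕ, ∀ d : ℕ, d₀ < d → ∀ i j : Fin N,
      1 - ENNReal.ofReal δ <
        gaussMatrix N d
          {E | |S i j -
            (1 / (d : ℝ)) * ∑ k, (normAdj A ^ K * E) i k * (normAdj A ^ K * E) j k| < ε} :=
  stmt_12_general A K S hS ε δ hε hδ
end
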